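/- Fix p with 1 < p ≤ 2 and 0 < ε₋ ≤ ε₊ < ∞. Then for every t with 0 ≤ t ≤ ε₊ one has 0 ≤ κ_ε(t) − (1/p) t^p ≤ (1/p) ε₋^p. In particular, κ_ε(t) converges to (1/p)t^p as ε₋ → 0 and ε₊ → ∞. -/
import Mathlib


/-- The relaxed integrand `κ_ε`. -/
noncomputable def kappaEps (p εm εp t : ℝ) : ℝ :=
  if t ≤ εm then (1 / 2) * εm ^ (p - 2) * t ^ 2 + (1 / p - 1 / 2) * εm ^ p
  else if t ≤ εp then (1 / p) * t ^ p
  else (1 / 2) * εp ^ (p - 2) * t ^ 2 + (1 / p - 1 / 2) * εp ^ p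

/-- for `0 ≤ t ≤ ε₊` one has `0 ≤ κ_ε(t) - (1/p) t^p ≤ (1/p) ε₋^p`. -/
theorem stmt_10 (p εm εp : ℝ) (hp1 : 1 < p) (hp2 : p ≤ 2)
    (hεm : 0 < εm) (hε : εm ≤ εp) :
    ∀ t : ℝ, 0 ≤ t → t ≤ εp →
      0 ≤ kappaEps p εm εp t - (1 / p) * t ^ p ∧
      kappaEps p εm εp t - (1 / p) * t ^ p ≤ (1 / p) * εm ^ p := by
  intro t ht htp
  have hp0 : (0:ℝ) < p := by linarith
  have hεmp : (0:ℝ) < εm ^ p := Real.rpow_pos_of_pos hεm p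
  unfold kappaEps
  by_cases h1 : t ≤ εm
  · rw [if_pos h1]
    -- key identities
    set x : ℝ := (t / εm) ^ 2 with hx
    have hx0 : 0 ≤ x := sq_nonneg _
    have htd : 0 ≤ t / εm := div_nonneg ht hεm.le
    have hxp : (t / εm) ^ p = x ^ (p / 2) := by
      rw [hx, ← Real.rpow_natCast (t / εm) 2, ← Real.rpow_mul htd]
      congr 1; ring
    have htp_eq : t ^ p = εm ^ p * x ^ (p / 2) := by
      rw [← hxp, Real.div_rpow ht hεm.le]
      field_simp
    have ht2_eq : εm ^ (p - 2) * t ^ 2 = εm ^ p * x := by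
      rw [hx, div_pow, Real.rpow_sub hεm]
      rw [← Real.rpow_natCast εm 2]
      norm_num
      field_simp
    -- Bernoulli : x ^ (p/2) ≤ 1 + (p/2)(x - 1)
    have hbern : x ^ (p / 2) ≤ 1 + (p / 2) * (x - 1) := by
      have := rpow_one_add_le_one_add_mul_self (s := x - 1)
        (by linarith) (p := p / 2) (by linarith) (by linarith)
      simpa using this
    have hx1 : x ≤ 1 := by
      rw [hx]
      have : t / εm ≤ 1 := (div_le_one hεm).mpr h1
      exact pow_le_one₀ htd this
    constructor
    · -- lower bound
      have : εm ^ p * x ^ (p / 2) ≤ εm ^ p * (1 + (p / 2) * (x - 1)) :=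
        mul_le_mul_of_nonneg_left hbern hεmp.le
      rw [htp_eq, show (1/2:ℝ) * εm^(p-2) * t^2 = 1/2 * (εm^(p-2) * t^2) by ring, ht2_eq]
      have h2 : (1 / p) * (εm ^ p * x ^ (p / 2)) ≤
          (1 / p) * (εm ^ p * (1 + (p / 2) * (x - 1))) := by
        apply mul_le_mul_of_nonneg_left this
        positivity
      have h3 : (1 / p) * (εm ^ p * (1 + (p / 2) * (x - 1))) =
          (1 / 2) * (εm ^ p * x) + (1 / p - 1 / 2) * εm ^ p := by
        field_simp
        ring
      linarith
    · -- upper bound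
      have hxpnn : 0 ≤ x ^ (p / 2) := Real.rpow_nonneg hx0 _
      rw [htp_eq, show (1/2:ℝ) * εm^(p-2) * t^2 = 1/2 * (εm^(p-2) * t^2) by ring, ht2_eq]
      have : (1 / 2) * (εm ^ p * x) ≤ (1 / 2) * εm ^ p := by nlinarith
      have h4 : 0 ≤ (1 / p) * (εm ^ p * x ^ (p / 2)) := by positivity
      nlinarith
  · rw [if_neg h1, if_pos htp]
    constructor
    · simp
    · have : (0:ℝ) ≤ (1 / p) * εm ^ p := by positivity
      simpa using this
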